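/- Let γ ≥ 0 and n ≥ 1 be integers, and suppose integers c₀, c₁, …, c_q and nonnegative integers r₀, …, r_{q−1} satisfy c₀ = 0, r_p = 2γ − 2 + c_{p+1} − c_p for 0 ≤ p ≤ q−1, c_q ≤ 0, and 2q ≤ n+1. Then r₀ ≤ (n+1)(γ − 1). -/

import Mathlib

/-!
Summing `r_p = 2γ − 2 + c_{p+1} − c_p` over `p < q` telescopes to
`∑ r_p = q (2γ − 2) + c_q − c_0 ≤ 2q(γ − 1)`. Since every `r_p ≥ 0`, this bounds `r₀`, and it
forces `γ ≥ 1`; then `2q ≤ n + 1` gives `r₀ ≤ (n + 1)(γ − 1)`.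
-/

open Finset

theorem Finset.sum_range_eq_of_eq_add_sub {R : Type*} [CommRing R] (a : R) (c r : ℕ → R)
    (q : ℕ) (hr : ∀ p < q, r p = a + c (p + 1) - c p) :
    ∑ p ∈ range q, r p = q * a + (c q - c 0) := by
  rw [sum_congr rfl fun p hp => (hr p (mem_range.1 hp)).trans (add_sub_assoc _ _ _),
    sum_add_distrib, sum_range_sub, sum_const, card_range, nsmul_eq_mul]

theorem le_sum_range_of_nonneg {R : Type*} [AddCommMonoid R] [PartialOrder R]
    [IsOrderedAddMonoid R] (r : ℕ → R) {q : ℕ} (hq : 1 ≤ q) (hrpos : ∀ p < q, 0 ≤ r p) :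
    r 0 ≤ ∑ p ∈ range q, r p :=
  single_le_sum (fun p hp => hrpos p (mem_range.1 hp)) (mem_range.2 hq)

theorem stmt_5_general (γ n : ℤ) (q : ℕ) (hq : 1 ≤ q)
    (c : ℕ → ℤ) (r : ℕ → ℤ) (hc0 : c 0 = 0)
    (hr : ∀ p < q, r p = 2 * γ - 2 + c (p + 1) - c p)
    (hrpos : ∀ p < q, 0 ≤ r p)
    (hcq : c q ≤ 0) (hqn : 2 * (q : ℤ) ≤ n + 1) :
    r 0 ≤ (n + 1) * (γ - 1) := by
  have hsum := sum_range_eq_of_eq_add_sub _ c r q hr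
  have hr0_le := le_sum_range_of_nonneg r hq hrpos
  have hr0_bound : r 0 ≤ 2 * q * (γ - 1) := by rw [hc0] at hsum; linarith
  have hq_pos : (1 : ℤ) ≤ q := by exact_mod_cast hq
  have hγ : 1 ≤ γ := by nlinarith [hrpos 0 hq]
  calc r 0 ≤ 2 * q * (γ - 1) := hr0_bound
    _ ≤ (n + 1) * (γ - 1) := mul_le_mul_of_nonneg_right hqn (sub_nonneg.2 hγ)

/-- Telescoping argument for Case (A) of the branching bound: with `c₀ = 0`,
`r_p = 2γ − 2 + c_{p+1} − c_p` and `r_p ≥ 0` for `p < q`, `c_q ≤ 0` and `2q ≤ n + 1`,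
one gets `r₀ ≤ (n+1)(γ−1)`. -/
theorem stmt_5 (γ n : ℤ) (hγ : 0 ≤ γ) (hn : 1 ≤ n) (q : ℕ) (hq : 1 ≤ q)
    (c : ℕ → ℤ) (r : ℕ → ℤ) (hc0 : c 0 = 0)
    (hr : ∀ p < q, r p = 2 * γ - 2 + c (p + 1) - c p)
    (hrpos : ∀ p < q, 0 ≤ r p)
    (hcq : c q ≤ 0) (hqn : 2 * (q : ℤ) ≤ n + 1) :
    r 0 ≤ (n + 1) * (γ - 1) :=
  stmt_5_general γ n q hq c r hc0 hr hrpos hcq hqn
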